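/- Let E be a Banach space and suppose S : (0,T] → (E →L E) satisfies ‖S(t)‖ ≤ C/t for all t ∈ (0,T] (parabolic smoothing of e^{tA}A). Then for any τ ∈ (0,1) with n·τ ≤ T and any family (I_k) with ‖I_k‖ ≤ M·τ^{3-p} (for fixed p ∈ (0,1)), the sum ‖Σ_{k=0}^{n-2} S((n-k-1)τ) I_k‖ is bounded by C·M·τ^{2-p}·(1 + |log τ|). -/

import Mathlib

/-!
With `j = n - k - 1`, the `k`-th term is at most `(C / (j τ)) · M τ^(3-p) = C M τ^(2-p) / j`, so the
sum is bounded by `C M τ^(2-p)` times the harmonic number `H_(n-1) ≤ 1 + log (T / τ)`.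
-/

open Finset Real

theorem harmonic_le_one_add_log_of_le {m : ℕ} {x : ℝ} (hm : 0 < m) (hx : (m : ℝ) ≤ x) :
    (harmonic m : ℝ) ≤ 1 + log x := by
  have hm' : (0 : ℝ) < m := by exact_mod_cast hm
  linarith [harmonic_le_one_add_log m, log_le_log hm' hx]

theorem harmonic_le_one_add_abs_log_mul {m : ℕ} {T τ : ℝ} (hm : 0 < m) (hτ : 0 < τ)
    (hmτ : (m : ℝ) * τ ≤ T) : (harmonic m : ℝ) ≤ (1 + |log T|) * (1 + |log τ|) := by
  have hT : 0 < T := lt_of_lt_of_le (by positivity) hmτ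
  have hharm := harmonic_le_one_add_log_of_le hm ((le_div_iff₀ hτ).mpr hmτ)
  rw [log_div hT.ne' hτ.ne'] at hharm
  nlinarith [le_abs_self (log T), neg_le_abs (log τ), abs_nonneg (log T), abs_nonneg (log τ)]

theorem norm_sum_range_apply_le_harmonic {𝕜 E F : Type*} [NontriviallyNormedField 𝕜]
    [NormedAddCommGroup E] [NormedSpace 𝕜 E] [NormedAddCommGroup F] [NormedSpace 𝕜 F]
    (S : ℝ → E →L[𝕜] F) (I : ℕ → E) {C B τ : ℝ} {m : ℕ} (hτ : 0 < τ)
    (hS : ∀ t ∈ Set.Ioc 0 (m * τ), ‖S t‖ ≤ C / t) (hI : ∀ k, ‖I k‖ ≤ B) :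
    ‖∑ k ∈ range m, S ((m - k : ℕ) * τ) (I k)‖ ≤ C * B / τ * harmonic m := by
  rw [← sum_range_reflect]
  calc ‖∑ j ∈ range m, S ((m - (m - 1 - j) : ℕ) * τ) (I (m - 1 - j))‖
      ≤ ∑ j ∈ range m, C * B / τ * ((j + 1 : ℕ) : ℝ)⁻¹ := by
        refine norm_sum_le_of_le _ fun j hj => ?_
        have hj : j < m := mem_range.mp hj
        rw [show m - (m - 1 - j) = j + 1 by omega]
        have ht : ((j + 1 : ℕ) : ℝ) * τ ∈ Set.Ioc 0 (m * τ) :=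
          ⟨by positivity, by gcongr; exact_mod_cast hj⟩
        calc ‖S ((j + 1 : ℕ) * τ) (I (m - 1 - j))‖
            ≤ ‖S ((j + 1 : ℕ) * τ)‖ * ‖I (m - 1 - j)‖ := (S _).le_opNorm _
          _ ≤ C / ((j + 1 : ℕ) * τ) * B :=
            mul_le_mul (hS _ ht) (hI _) (norm_nonneg _) ((norm_nonneg _).trans (hS _ ht))
          _ = C * B / τ * ((j + 1 : ℕ) : ℝ)⁻¹ := by field_simp
    _ = C * B / τ * harmonic m := by simp [harmonic, ← mul_sum]

theorem stmt_2_general (E : Type*) [NormedAddCommGroup E] [NormedSpace ℝ E]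
    (T C p : ℝ) (hC : 0 < C) :
    ∃ C' > 0, ∀ (S : ℝ → E →L[ℝ] E) (I : ℕ → E) (M τ : ℝ) (n : ℕ),
      0 ≤ M → τ ∈ Set.Ioo (0 : ℝ) 1 → (n : ℝ) * τ ≤ T →
      (∀ t ∈ Set.Ioc (0 : ℝ) T, ‖S t‖ ≤ C / t) →
      (∀ k, ‖I k‖ ≤ M * τ ^ (3 - p)) →
      ‖∑ k ∈ Finset.range (n - 1), (S (((n : ℝ) - k - 1) * τ)) (I k)‖ ≤
        C' * M * τ ^ (2 - p) * (1 + |Real.log τ|) := by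
  refine ⟨C * (1 + |log T|), by positivity, fun S I M τ n hM ⟨hτ0, _⟩ hnτ hS hI => ?_⟩
  rcases Nat.eq_zero_or_pos (n - 1) with hm | hm
  · rw [hm, range_zero, sum_empty, norm_zero]
    positivity
  set m := n - 1
  have hmτ : (m : ℝ) * τ ≤ T := le_trans (by gcongr; exact_mod_cast Nat.sub_le n 1) hnτ
  have hargs : ∀ k ∈ range m, S (((n : ℝ) - k - 1) * τ) (I k) = S ((m - k : ℕ) * τ) (I k) := by
    intro k hk
    rw [Nat.cast_sub (mem_range.mp hk).le, Nat.cast_sub (by omega : 1 ≤ n)]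
    ring_nf
  rw [sum_congr rfl hargs]
  calc _ ≤ C * (M * τ ^ (3 - p)) / τ * harmonic m :=
        norm_sum_range_apply_le_harmonic S I hτ0 (fun t ht => hS t ⟨ht.1, ht.2.trans hmτ⟩) hI
    _ = C * M * τ ^ (2 - p) * harmonic m := by
      rw [show 3 - p = (2 - p) + 1 by ring, rpow_add hτ0, rpow_one]
      field_simp
    _ ≤ C * M * τ ^ (2 - p) * ((1 + |log T|) * (1 + |log τ|)) := by
      gcongr
      exact harmonic_le_one_add_abs_log_mul hm hτ0 hmτ
    _ = C * (1 + |log T|) * M * τ ^ (2 - p) * (1 + |log τ|) := by ring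

open Set in
/-- Summation estimate with parabolic smoothing for the fractional-order
convergence of classical Strang splitting. -/
theorem stmt_2 (E : Type*) [NormedAddCommGroup E] [NormedSpace ℝ E] [CompleteSpace E]
    (T C p : ℝ) (hT : 0 < T) (hC : 0 < C) (hp : p ∈ Set.Ioo (0 : ℝ) 1) :
    ∃ C' > 0, ∀ (S : ℝ → E →L[ℝ] E) (I : ℕ → E) (M τ : ℝ) (n : ℕ),
      0 ≤ M → τ ∈ Set.Ioo (0 : ℝ) 1 → (n : ℝ) * τ ≤ T →
      (∀ t ∈ Set.Ioc (0 : ℝ) T, ‖S t‖ ≤ C / t) →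
      (∀ k, ‖I k‖ ≤ M * τ ^ (3 - p)) →
      ‖∑ k ∈ Finset.range (n - 1), (S (((n : ℝ) - k - 1) * τ)) (I k)‖ ≤
        C' * M * τ ^ (2 - p) * (1 + |Real.log τ|) :=
  stmt_2_general E T C p hC
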